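/- arXiv:2010.15988 — 2 statements merged into one kernel-verified Lean document; each statement's English description precedes it below -/
import Mathlib

section
/- Let g = q₁⋯q_r be odd squarefree, d even with gcd(g,d) = q₁⋯q_s > 1. For ε₁, ε₂ ∈ {±1}, the number of residues 1 ≤ α ≤ g with Jacobi symbols (α/g) = ε₁ and ((α+d)/g) = ε₂ equals (1/4)·[|φ_d(g)| + (-1)^(r-s)·ε₁ε₂·∏_{i=1}^{s}(q_i - 1)]. -/
/-!
Write `χ a = (a/g)` and `ψ a = ((a+d)/g)`. Both take values in `{0, ±1}`, so
`2·[χ a = ε] = χ a ^ 2 + ε χ a`, and four times the count is `∑_{a mod g} (χ² + ε₁χ)(ψ² + ε₂ψ)`,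
whose `χ²ψ²` part counts `φ_d(g)`. Each sum `S_{i,j}(g) = ∑_{a mod g} χ(a)^i ψ(a)^j` is
multiplicative in `g` by the Chinese remainder theorem. At a prime `q ∣ gcd(g, d)` we have `ψ = χ`,
so `S_{1,2}(q) = S_{2,1}(q) = ∑ χ = 0` kills the cross terms, while `S_{1,1}(q) = q - 1`; at a
prime `q ∤ d`, `S_{1,1}(q) = χ(-1) J(χ, χ) = -1` by the Jacobi sum `J(χ, χ⁻¹) = -χ(-1)`.
-/

open Finset

theorem Function.Periodic.sum_Icc_one_eq_sum_range {M : Type*} [AddCommMonoid M] {f : ℕ → M}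
    {n : ℕ} (hf : Function.Periodic f n) : ∑ a ∈ Icc 1 n, f a = ∑ a ∈ range n, f a := by
  have hshift : ∑ a ∈ Icc 1 n, f a = ∑ a ∈ range n, f (a + 1) := by
    rw [range_eq_Ico, sum_Ico_add']
    rfl
  rcases n with _ | k
  · rfl
  rw [hshift, sum_range_succ, hf.eq, sum_range_succ' f]

theorem Function.Periodic.sum_range_mul_of_coprime {R : Type*} [CommSemiring R] {f g : ℕ → R}
    {m n : ℕ} (hf : Function.Periodic f m) (hg : Function.Periodic g n) (h : m.Coprime n) :
    ∑ a ∈ range (m * n), f a * g a = (∑ a ∈ range m, f a) * ∑ b ∈ range n, g b := by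
  rcases Nat.eq_zero_or_pos m with rfl | hm
  · simp
  rcases Nat.eq_zero_or_pos n with rfl | hn
  · simp
  rw [sum_mul_sum, ← sum_product']
  have hmaps : ∀ a ∈ range (m * n), (a % m, a % n) ∈ range m ×ˢ range n := fun a _ =>
    mem_product.2 ⟨mem_range.2 (Nat.mod_lt a hm), mem_range.2 (Nat.mod_lt a hn)⟩
  have hinj : Set.InjOn (fun a => (a % m, a % n)) (range (m * n) : Set ℕ) := by
    intro a ha b hb hab
    simp only [coe_range, Set.mem_Iio, Prod.mk.injEq] at ha hb hab
    exact ((Nat.modEq_and_modEq_iff_modEq_mul h).1 hab).eq_of_lt_of_lt ha hb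
  refine sum_nbij _ hmaps hinj
    (surjOn_of_injOn_of_card_le _ hmaps hinj (by simp)) fun a _ => ?_
  rw [hf.map_mod_nat, hg.map_mod_nat]

theorem sum_range_natCast_eq_sum_zmod {M : Type*} [AddCommMonoid M] (n : ℕ) [NeZero n]
    (F : ZMod n → M) : ∑ a ∈ range n, F a = ∑ x : ZMod n, F x :=
  sum_nbij' (↑) ZMod.val (fun _ _ => mem_univ _) (fun x _ => mem_range.2 x.val_lt)
    (fun _ ha => ZMod.val_cast_of_lt (mem_range.1 ha)) (fun x _ => ZMod.natCast_zmod_val x)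
    fun _ _ => rfl

theorem MulChar.IsQuadratic.sum_mul_add_eq_neg_one {F R : Type*} [Field F] [Fintype F]
    [CommRing R] [IsDomain R] {χ : MulChar F R} (hχ : χ.IsQuadratic) (hχ₁ : χ ≠ 1) {δ : F}
    (hδ : δ ≠ 0) : ∑ x, χ x * χ (x + δ) = -1 := by
  have hsq : ∀ {a : F}, a ≠ 0 → χ a ^ 2 = 1 := fun ha => by
    rw [← χ.pow_apply' two_ne_zero, hχ.sq_eq_one, MulChar.one_apply (Ne.isUnit ha)]
  -- substituting `x = -δ y` turns the sum into `χ (-1) * jacobiSum χ χ`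
  have hsubst : ∀ y, χ (-δ * y) * χ (-δ * y + δ) = χ (-1) * (χ y * χ (1 - y)) := fun y => by
    rw [show -δ * y + δ = δ * (1 - y) by ring, show -δ * y = -1 * δ * y by ring, map_mul,
      map_mul, map_mul]
    linear_combination χ (-1) * χ y * χ (1 - y) * hsq hδ
  rw [← Equiv.sum_comp (Equiv.mulLeft₀ (-δ) (neg_ne_zero.2 hδ))]
  simp only [Equiv.mulLeft₀, Units.mulLeft_apply, Units.val_mk0, hsubst, ← mul_sum]
  rw [← jacobiSum, ← congrArg (jacobiSum χ) hχ.inv, jacobiSum_nontrivial_inv hχ₁]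
  linear_combination -hsq (neg_ne_zero.2 one_ne_zero)

theorem Nat.prod_primeFactors_ite_dvd {M : Type*} [CommMonoid M] {n : ℕ} (hn : n ≠ 0) (d : ℕ)
    (f : ℕ → M) (c : M) :
    ∏ p ∈ n.primeFactors, (if p ∣ d then f p else c)
      = c ^ (#n.primeFactors - #(n.gcd d).primeFactors) * ∏ p ∈ (n.gcd d).primeFactors, f p := by
  have hfilter : {p ∈ n.primeFactors | p ∣ d} = (n.gcd d).primeFactors := by
    ext p
    simp only [mem_filter, Nat.mem_primeFactors, Nat.dvd_gcd_iff, ne_eq, Nat.gcd_eq_zero_iff]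
    tauto
  rw [prod_ite, hfilter, prod_const, mul_comm, ← hfilter, ← card_filter_add_card_filter_not
    (s := n.primeFactors) (· ∣ d), Nat.add_sub_cancel_left]

theorem periodic_jacobiSym_natCast_add (c : ℤ) (n : ℕ) :
    Function.Periodic (fun a : ℕ => jacobiSym (a + c) n) n := fun a =>
  jacobiSym.mod_left' (by push_cast; rw [add_right_comm, Int.add_emod_right])

theorem jacobiSym_sq_eq_ite (a : ℤ) (n : ℕ) [NeZero n] :
    jacobiSym a n ^ 2 = if a.gcd n = 1 then 1 else 0 := by
  split_ifs with h
  · exact jacobiSym.sq_one h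
  · rw [jacobiSym.eq_zero_iff_not_coprime.2 h, zero_pow two_ne_zero]

theorem two_mul_ite_eq_sq_add_mul {x ε : ℤ} (hx : x = 0 ∨ x = 1 ∨ x = -1)
    (hε : ε = 1 ∨ ε = -1) : 2 * (if x = ε then 1 else 0) = x ^ 2 + ε * x := by
  rcases hx with rfl | rfl | rfl <;> rcases hε with rfl | rfl <;> norm_num

def shiftedJacobiSum (d i j : ℕ) : ArithmeticFunction ℤ :=
  ⟨fun n => ∑ a ∈ range n, jacobiSym a n ^ i * jacobiSym ((a : ℤ) + d) n ^ j, by simp⟩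

namespace shiftedJacobiSum

variable {d i j : ℕ}

theorem apply (n : ℕ) :
    shiftedJacobiSum d i j n = ∑ a ∈ range n, jacobiSym a n ^ i * jacobiSym ((a : ℤ) + d) n ^ j :=
  rfl

theorem periodic_summand (n : ℕ) :
    Function.Periodic (fun a : ℕ => jacobiSym a n ^ i * jacobiSym ((a : ℤ) + d) n ^ j) n := by
  simpa using ((periodic_jacobiSym_natCast_add 0 n).comp (· ^ i)).mul
    ((periodic_jacobiSym_natCast_add d n).comp (· ^ j))

theorem sum_Icc (n : ℕ) :
    ∑ a ∈ Icc 1 n, jacobiSym a n ^ i * jacobiSym ((a : ℤ) + d) n ^ j = shiftedJacobiSum d i j n :=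
  Function.Periodic.sum_Icc_one_eq_sum_range (periodic_summand n)

theorem isMultiplicative : (shiftedJacobiSum d i j).IsMultiplicative := by
  refine ⟨by simp [apply, jacobiSym.one_right], fun {m n} hmn => ?_⟩
  rcases eq_or_ne m 0 with rfl | hm
  · simp [apply]
  rcases eq_or_ne n 0 with rfl | hn
  · simp [apply]
  simp only [apply, jacobiSym.mul_right' _ hm hn, mul_pow]
  rw [← (periodic_summand m).sum_range_mul_of_coprime (periodic_summand n) hmn]
  exact sum_congr rfl fun a _ => by ring

theorem apply_prime (p : ℕ) [Fact p.Prime] :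
    shiftedJacobiSum d i j p
      = ∑ x : ZMod p, quadraticChar (ZMod p) x ^ i * quadraticChar (ZMod p) (x + d) ^ j := by
  rw [apply, ← sum_range_natCast_eq_sum_zmod]
  refine sum_congr rfl fun a _ => ?_
  rw [← jacobiSym.legendreSym.to_jacobiSym, ← jacobiSym.legendreSym.to_jacobiSym]
  simp [legendreSym]

theorem one_one_apply_prime {p : ℕ} (hp : p.Prime) (hp2 : p ≠ 2) :
    shiftedJacobiSum d 1 1 p = if p ∣ d then (p : ℤ) - 1 else -1 := by
  have := Fact.mk hp
  have hχ := quadraticChar_isQuadratic (ZMod p)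
  have hχ₁ := quadraticChar_ne_one (F := ZMod p) (by rwa [ZMod.ringChar_zmod_n])
  simp only [apply_prime p, pow_one]
  split_ifs with hpd
  · simp only [(ZMod.natCast_eq_zero_iff d p).2 hpd, add_zero, ← sq,
      ← MulChar.pow_apply' _ two_ne_zero, hχ.sq_eq_one, MulChar.sum_one_eq_card_units,
      ZMod.card_units]
    rw [Nat.cast_sub hp.one_le, Nat.cast_one]
  · exact hχ.sum_mul_add_eq_neg_one hχ₁ (by rwa [Ne, ZMod.natCast_eq_zero_iff])

theorem apply_prime_eq_zero {p : ℕ} (hp : p.Prime) (hp2 : p ≠ 2) (hpd : p ∣ d) (hij : Odd (i + j)) :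
    shiftedJacobiSum d i j p = 0 := by
  have := Fact.mk hp
  have hodd : ∀ x : ZMod p, quadraticChar (ZMod p) x ^ (i + j) = quadraticChar (ZMod p) x :=
    fun x => by
      rcases quadraticChar_isQuadratic (ZMod p) x with h | h | h <;> rw [h]
      exacts [zero_pow hij.pos.ne', one_pow _, hij.neg_one_pow]
  simp only [apply_prime p, (ZMod.natCast_eq_zero_iff d p).2 hpd, add_zero, ← pow_add, hodd]
  exact quadraticChar_sum_zero (F := ZMod p) (by rwa [ZMod.ringChar_zmod_n])

theorem apply_eq_zero_of_prime_dvd {n p : ℕ} (hn : Squarefree n) (hp : p.Prime) (hp2 : p ≠ 2)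
    (hpn : p ∣ n) (hpd : p ∣ d) (hij : Odd (i + j)) : shiftedJacobiSum d i j n = 0 := by
  rw [← isMultiplicative.prod_primeFactors hn]
  exact prod_eq_zero (Nat.mem_primeFactors.2 ⟨hp, hpn, hn.ne_zero⟩)
    (apply_prime_eq_zero hp hp2 hpd hij)

theorem one_one_apply {n : ℕ} (hodd : Odd n) (hn : Squarefree n) :
    shiftedJacobiSum d 1 1 n = (-1) ^ (#n.primeFactors - #(n.gcd d).primeFactors)
      * ∏ q ∈ (n.gcd d).primeFactors, ((q : ℤ) - 1) := by
  rw [← isMultiplicative.prod_primeFactors hn, ← Nat.prod_primeFactors_ite_dvd hn.ne_zero]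
  exact prod_congr rfl fun p hp => one_one_apply_prime (Nat.prime_of_mem_primeFactors hp)
    (hodd.ne_two_of_dvd_nat (Nat.dvd_of_mem_primeFactors hp))

end shiftedJacobiSum

theorem four_mul_card_filter_jacobiSym_eq (n d : ℕ) {ε₁ ε₂ : ℤ} (hε₁ : ε₁ = 1 ∨ ε₁ = -1)
    (hε₂ : ε₂ = 1 ∨ ε₂ = -1) :
    4 * (((Icc 1 n).filter
        fun a : ℕ => jacobiSym a n = ε₁ ∧ jacobiSym ((a : ℤ) + d) n = ε₂).card : ℤ)
      = shiftedJacobiSum d 2 2 n + ε₂ * shiftedJacobiSum d 2 1 n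
        + ε₁ * shiftedJacobiSum d 1 2 n + ε₁ * ε₂ * shiftedJacobiSum d 1 1 n := by
  have hterm : ∀ a : ℕ, 4 * (if jacobiSym a n = ε₁ ∧ jacobiSym ((a : ℤ) + d) n = ε₂ then 1 else 0)
      = jacobiSym a n ^ 2 * jacobiSym ((a : ℤ) + d) n ^ 2
        + ε₂ * (jacobiSym a n ^ 2 * jacobiSym ((a : ℤ) + d) n ^ 1)
        + ε₁ * (jacobiSym a n ^ 1 * jacobiSym ((a : ℤ) + d) n ^ 2)
        + ε₁ * ε₂ * (jacobiSym a n ^ 1 * jacobiSym ((a : ℤ) + d) n ^ 1) := fun a => by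
    rw [ite_and, ← boole_mul, show (4 : ℤ) = 2 * 2 by norm_num, mul_mul_mul_comm,
      two_mul_ite_eq_sq_add_mul (jacobiSym.trichotomy _ _) hε₁,
      two_mul_ite_eq_sq_add_mul (jacobiSym.trichotomy _ _) hε₂]
    ring
  simp only [← shiftedJacobiSum.sum_Icc, mul_sum, ← sum_add_distrib, ← hterm, card_filter,
    Nat.cast_sum, Nat.cast_ite, Nat.cast_one, Nat.cast_zero]

theorem card_filter_coprime_coprime_add (n d : ℕ) [NeZero n] :
    (#{a ∈ Icc 1 n | a.gcd n = 1 ∧ (a + d).gcd n = 1} : ℤ) = shiftedJacobiSum d 2 2 n := by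
  rw [← shiftedJacobiSum.sum_Icc, card_filter, Nat.cast_sum]
  refine sum_congr rfl fun a _ => ?_
  rw [← Nat.cast_add, jacobiSym_sq_eq_ite, jacobiSym_sq_eq_ite, ite_zero_mul_ite_zero, one_mul,
    Int.gcd_natCast_natCast, Int.gcd_natCast_natCast, Nat.cast_ite, Nat.cast_one, Nat.cast_zero]

theorem stmt_6_general (g d : ℕ) (hgodd : Odd g) (hgsf : Squarefree g)
    (hgd : 1 < Nat.gcd g d)
    (ε₁ ε₂ : ℤ) (hε₁ : ε₁ = 1 ∨ ε₁ = -1) (hε₂ : ε₂ = 1 ∨ ε₂ = -1) :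
    4 * (((Finset.Icc 1 g).filter
        (fun α : ℕ => jacobiSym (α : ℤ) g = ε₁ ∧ jacobiSym ((α : ℤ) + d) g = ε₂)).card : ℤ)
      = (((Finset.Icc 1 g).filter
          (fun α => Nat.gcd α g = 1 ∧ Nat.gcd (α + d) g = 1)).card : ℤ)
        + (-1) ^ (g.primeFactors.card - (Nat.gcd g d).primeFactors.card) *
            ε₁ * ε₂ * ∏ q ∈ (Nat.gcd g d).primeFactors, ((q : ℤ) - 1) := by
  have : NeZero g := ⟨hgodd.pos.ne'⟩
  obtain ⟨q, hq, hqgd⟩ := Nat.exists_prime_and_dvd hgd.ne'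
  have hqg : q ∣ g := hqgd.trans (Nat.gcd_dvd_left g d)
  have hcross : ∀ {i j : ℕ}, Odd (i + j) → shiftedJacobiSum d i j g = 0 := fun hij =>
    shiftedJacobiSum.apply_eq_zero_of_prime_dvd hgsf hq (hgodd.ne_two_of_dvd_nat hqg) hqg
      (hqgd.trans (Nat.gcd_dvd_right g d)) hij
  rw [four_mul_card_filter_jacobiSym_eq g d hε₁ hε₂, card_filter_coprime_coprime_add,
    hcross (i := 2) (j := 1) (by decide), hcross (i := 1) (j := 2) (by decide),
    shiftedJacobiSum.one_one_apply hgodd hgsf]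
  ring

theorem stmt_6 (g d : ℕ) (hgodd : Odd g) (hgsf : Squarefree g)
    (hd : 0 < d) (hde : Even d) (hgd : 1 < Nat.gcd g d)
    (ε₁ ε₂ : ℤ) (hε₁ : ε₁ = 1 ∨ ε₁ = -1) (hε₂ : ε₂ = 1 ∨ ε₂ = -1) :
    4 * (((Finset.Icc 1 g).filter
        (fun α : ℕ => jacobiSym (α : ℤ) g = ε₁ ∧ jacobiSym ((α : ℤ) + d) g = ε₂)).card : ℤ)
      = (((Finset.Icc 1 g).filter
          (fun α => Nat.gcd α g = 1 ∧ Nat.gcd (α + d) g = 1)).card : ℤ)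
        + (-1) ^ (g.primeFactors.card - (Nat.gcd g d).primeFactors.card) *
            ε₁ * ε₂ * ∏ q ∈ (Nat.gcd g d).primeFactors, ((q : ℤ) - 1) :=
  stmt_6_general g d hgodd hgsf hgd ε₁ ε₂ hε₁ hε₂
end

section
/- Let g be odd squarefree and d even. Then |Φ_{1,1}(g,d)| = 0 if and only if: (g = 5 and d ≡ 1 or 4 mod 5), or (g does not divide d but g divides 3d). -/
/-!
Write `S(m)` for the set `jacobiPairs d m` of pairs `(J(a | m), J(a + d | m))`; then
`Φ_{1,1}(g, d)` is empty iff `(1, 1) ∉ S(g)`. By the Chinese remainder theorem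
`S(m) * S(n) ⊆ S(m n)` for coprime `m, n`, and `g = u v` with `u ∣ d` and `v` coprime to `d`.
The set `S(u)` contains `(1, 1)`, and `(-1, -1)` if `u ≠ 1`. For a prime `p ∤ 6d`, multiplying
a square followed by a nonsquare (or a nonsquare followed by a square) by `d` puts `(1, -1)` and
`(-1, 1)` into `S(p)`, and writing `d = z² - y²` puts `(1, 1)` into `S(p)` unless `p = 5`; `S(5)`
then contains `(1, 1)` or `(-1, -1)` according to `d mod 5`, and `S(3)` contains one of `(1, -1)`,
`(-1, 1)`. Multiplying out gives `(1, 1) ∈ S(g)` unless `v = 3` (that is, `g ∤ d` and `g ∣ 3d`)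
or `g = 5` with `d ≡ ±1 (mod 5)`, and in these two cases a computation modulo `3`, resp. `5`,
shows that `(1, 1) ∉ S(g)`.
-/

theorem Int.exists_modEq_and_modEq {m n : ℤ} (h : IsCoprime m n) (a b : ℤ) :
    ∃ x, x ≡ a [ZMOD m] ∧ x ≡ b [ZMOD n] := by
  obtain ⟨u, v, huv⟩ := h
  refine ⟨a * (v * n) + b * (u * m), ?_, ?_⟩ <;> rw [Int.modEq_iff_dvd]
  · exact ⟨(a - b) * u, by linear_combination (-a) * huv⟩
  · exact ⟨(b - a) * v, by linear_combination (-b) * huv⟩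

theorem Int.not_dvd_of_isCoprime {m q : ℕ} {D : ℤ} (h : IsCoprime (m : ℤ) D) (hq : q ∣ m)
    (hq1 : q ≠ 1) : ¬(q : ℤ) ∣ D := by
  intro hD
  have := Int.isUnit_iff.mp (h.isUnit_of_dvd' (Int.natCast_dvd_natCast.mpr hq) hD)
  omega

theorem Squarefree.exists_dvd_coprime_mul_eq {g : ℕ} (hg : Squarefree g) (d : ℕ) :
    ∃ u v, u ∣ d ∧ v.Coprime d ∧ u * v = g := by
  rcases eq_or_ne d 0 with rfl | hd
  · exact ⟨g, 1, dvd_zero g, Nat.coprime_one_left 0, mul_one g⟩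
  · exact ⟨g.gcd d, g / g.gcd d, Nat.gcd_dvd_right g d, Nat.coprime_div_gcd_of_squarefree hg hd,
      Nat.mul_div_cancel' (Nat.gcd_dvd_left g d)⟩

theorem exists_mem_Icc_modEq {g : ℕ} (hg : g ≠ 0) (a : ℤ) :
    ∃ α ∈ Finset.Icc 1 g, (α : ℤ) ≡ a [ZMOD g] := by
  have h₀ := Int.emod_nonneg (a - 1) (Int.natCast_ne_zero.mpr hg)
  have h₁ := Int.emod_lt_of_pos (a - 1) (Int.natCast_pos.mpr (Nat.pos_of_ne_zero hg))
  refine ⟨((a - 1) % g).toNat + 1, Finset.mem_Icc.mpr ⟨by omega, by omega⟩, ?_⟩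
  have := (Int.mod_modEq (a - 1) g).add_right 1
  rwa [sub_add_cancel, ← Int.toNat_of_nonneg h₀] at this

theorem jacobiSym_add_left_of_dvd {D : ℤ} {u : ℕ} (hu : (u : ℤ) ∣ D) (a : ℤ) :
    jacobiSym (a + D) u = jacobiSym a u := by
  obtain ⟨k, rfl⟩ := hu
  exact jacobiSym.mod_left' (Int.add_mul_emod_self_left a u k)

theorem exists_jacobiSym_eq_neg_one {u : ℕ} (hu : Squarefree u) (hodd : Odd u) (hu1 : u ≠ 1) :
    ∃ a : ℤ, jacobiSym a u = -1 := by
  set p := u.minFac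
  have hp : p.Prime := Nat.minFac_prime hu1
  have := Fact.mk hp
  have hp2 : p ≠ 2 := fun h => by
    have := Nat.odd_iff.mp (hodd.of_dvd_nat (Nat.minFac_dvd u))
    omega
  obtain ⟨w, hw⟩ := Nat.minFac_dvd u
  rw [hw] at hu ⊢
  obtain ⟨hpw, -, -⟩ := Nat.squarefree_mul_iff.mp hu
  have hw0 : w ≠ 0 := by rintro rfl; simp at hu
  obtain ⟨c, hc⟩ := FiniteField.exists_nonsquare (F := ZMod p) (by rwa [ZMod.ringChar_zmod_n])
  obtain ⟨x, hxc, hx1⟩ :=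
    Int.exists_modEq_and_modEq (Nat.isCoprime_iff_coprime.mpr hpw) c.cast 1
  refine ⟨x, ?_⟩
  rw [jacobiSym.mul_right' _ hp.ne_zero hw0, jacobiSym.mod_left' hxc, jacobiSym.mod_left' hx1,
    jacobiSym.one_left, mul_one, ZMod.nonsquare_iff_jacobiSym_eq_neg_one,
    ZMod.intCast_zmod_cast]
  exact hc

namespace ZMod

variable {p : ℕ} [Fact p.Prime]

theorem natCast_ne_zero_of_prime {q : ℕ} (hq : q.Prime) (hpq : p ≠ q) : (q : ZMod p) ≠ 0 := by
  rw [Ne, natCast_eq_zero_iff, Nat.prime_dvd_prime_iff_eq Fact.out hq]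
  exact hpq

theorem exists_isSquare_not_isSquare_add_one (hp : p ≠ 2) :
    ∃ b : ZMod p, b ≠ 0 ∧ IsSquare b ∧ ¬IsSquare (b + 1) := by
  by_contra! h
  obtain ⟨c, hc⟩ := FiniteField.exists_nonsquare (F := ZMod p) (by rwa [ringChar_zmod_n])
  -- otherwise the squares would contain `0, 1, 2, …`, that is, all of `ZMod p`
  have hsq (n : ℕ) : IsSquare (n : ZMod p) := by
    induction n with
    | zero => exact ⟨0, by simp⟩
    | succ n ih =>
      by_cases hn : (n : ZMod p) = 0
      · rw [Nat.cast_succ, hn, zero_add]; exact IsSquare.one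
      · exact_mod_cast h _ hn ih
  exact hc (by simpa using hsq c.val)

theorem exists_not_isSquare_isSquare_add_one (hp2 : p ≠ 2) (hp3 : p ≠ 3) :
    ∃ b : ZMod p, ¬IsSquare b ∧ b + 1 ≠ 0 ∧ IsSquare (b + 1) := by
  by_cases hneg : IsSquare (-1 : ZMod p)
  · obtain ⟨b, hb0, hb, hb1⟩ := exists_isSquare_not_isSquare_add_one hp2
    refine ⟨-(b + 1), fun h => hb1 (by simpa using hneg.mul h), by simpa using hb0, ?_⟩
    simpa using hneg.mul hb
  · have h2 : (2 : ZMod p) ≠ 0 := by exact_mod_cast natCast_ne_zero_of_prime Nat.prime_two hp2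
    have h3 : (3 : ZMod p) ≠ 0 := by exact_mod_cast natCast_ne_zero_of_prime Nat.prime_three hp3
    have h4 : (4 : ZMod p) ≠ 0 := by
      rw [show (4 : ZMod p) = 2 * 2 by norm_num]; exact mul_ne_zero h2 h2
    have h5 : (5 : ZMod p) ≠ 0 := fun h => hneg ⟨2, by linear_combination -h⟩
    -- `3² + 4² = 5²`
    refine ⟨-(3 / 5) ^ 2, fun h => hneg ?_, ?_, ⟨4 / 5, by field_simp; ring⟩⟩
    · have := h.mul ⟨5 / 3, rfl⟩
      rwa [show -(3 / 5) ^ 2 * (5 / 3 * (5 / 3)) = (-1 : ZMod p) by field_simp] at this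
    · rw [show -(3 / 5) ^ 2 + 1 = (4 / 5 : ZMod p) ^ 2 by field_simp; ring]
      exact pow_ne_zero 2 (div_ne_zero h4 h5)

theorem exists_sq_eq_sq_add (hp2 : p ≠ 2) (hp3 : p ≠ 3) (hp5 : p ≠ 5) (D : ZMod p) :
    ∃ y z : ZMod p, y ≠ 0 ∧ z ≠ 0 ∧ z ^ 2 = y ^ 2 + D := by
  have h2 : (2 : ZMod p) ≠ 0 := by exact_mod_cast natCast_ne_zero_of_prime Nat.prime_two hp2
  -- `t = 1` or `t = 2` works, as `2⁴ - 1⁴ = 3 * 5`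
  obtain ⟨t, ht0, ht⟩ : ∃ t : ZMod p, t ≠ 0 ∧ t ^ 4 ≠ D ^ 2 := by
    by_contra! h
    have h3 : (3 : ZMod p) ≠ 0 := by exact_mod_cast natCast_ne_zero_of_prime Nat.prime_three hp3
    have h5 : (5 : ZMod p) ≠ 0 := by exact_mod_cast natCast_ne_zero_of_prime (by norm_num) hp5
    exact mul_ne_zero h3 h5 (by linear_combination h 2 h2 - h 1 one_ne_zero)
  have hy : D - t ^ 2 ≠ 0 := fun h => ht (by linear_combination (-(D + t ^ 2)) * h)
  have hz : D + t ^ 2 ≠ 0 := fun h => ht (by linear_combination (t ^ 2 - D) * h)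
  refine ⟨(D - t ^ 2) / (2 * t), (D + t ^ 2) / (2 * t), div_ne_zero hy (mul_ne_zero h2 ht0),
    div_ne_zero hz (mul_ne_zero h2 ht0), ?_⟩
  field_simp
  ring

end ZMod

def jacobiPairs (D : ℤ) (m : ℕ) : Set (ℤ × ℤ) :=
  Set.range fun a : ℤ => (jacobiSym a m, jacobiSym (a + D) m)

theorem card_filter_jacobiSym_eq_zero_iff {g : ℕ} (hg : g ≠ 0) (d : ℕ) :
    ((Finset.Icc 1 g).filter
        (fun α : ℕ => jacobiSym (α : ℤ) g = 1 ∧ jacobiSym ((α : ℤ) + d) g = 1)).card = 0 ↔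
      1 ∉ jacobiPairs d g := by
  rw [Finset.card_eq_zero, Finset.filter_eq_empty_iff]
  constructor
  · rintro h ⟨a, ha⟩
    obtain ⟨h₁, h₂⟩ := Prod.mk_eq_one.mp ha
    obtain ⟨α, hα, hαa⟩ := exists_mem_Icc_modEq hg a
    exact h hα
      ⟨(jacobiSym.mod_left' hαa).trans h₁, (jacobiSym.mod_left' (hαa.add_right _)).trans h₂⟩
  · rintro h α - ⟨h₁, h₂⟩
    exact h ⟨α, Prod.ext h₁ h₂⟩

section jacobiPairs

variable {D : ℤ}

theorem mul_mem_jacobiPairs {m n : ℕ} (hm : m ≠ 0) (hn : n ≠ 0) (hmn : m.Coprime n)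
    {x y : ℤ × ℤ} (hx : x ∈ jacobiPairs D m) (hy : y ∈ jacobiPairs D n) :
    x * y ∈ jacobiPairs D (m * n) := by
  obtain ⟨a, rfl⟩ := hx
  obtain ⟨b, rfl⟩ := hy
  obtain ⟨c, hca, hcb⟩ := Int.exists_modEq_and_modEq (Nat.isCoprime_iff_coprime.mpr hmn) a b
  refine ⟨c, ?_⟩
  simp only [jacobiSym.mul_right' _ hm hn, jacobiSym.mod_left' hca, jacobiSym.mod_left' hcb,
    jacobiSym.mod_left' (hca.add_right D), jacobiSym.mod_left' (hcb.add_right D), Prod.mk_mul_mk]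

theorem diag_mem_jacobiPairs_of_dvd {u : ℕ} (hu : (u : ℤ) ∣ D) (a : ℤ) :
    (jacobiSym a u, jacobiSym a u) ∈ jacobiPairs D u :=
  ⟨a, by simp only [jacobiSym_add_left_of_dvd hu]⟩

theorem one_mem_jacobiPairs_of_dvd {u : ℕ} (hu : (u : ℤ) ∣ D) : 1 ∈ jacobiPairs D u := by
  simpa only [jacobiSym.one_left, ← Prod.one_eq_mk] using diag_mem_jacobiPairs_of_dvd hu 1

section Prime

variable {p : ℕ} [Fact p.Prime]

theorem quadraticChar_mem_jacobiPairs (x : ZMod p) :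
    (quadraticChar (ZMod p) x, quadraticChar (ZMod p) (x + D)) ∈ jacobiPairs D p :=
  ⟨(x.cast : ℤ), by
    simp only [← jacobiSym.legendreSym.to_jacobiSym, legendreSym, Int.cast_add,
      ZMod.intCast_zmod_cast]⟩

theorem mk_neg_mem_jacobiPairs (hp : p ≠ 2) :
    (legendreSym p D, -legendreSym p D) ∈ jacobiPairs D p := by
  obtain ⟨b, hb0, hb, hb1⟩ := ZMod.exists_isSquare_not_isSquare_add_one hp
  have := quadraticChar_mem_jacobiPairs (D := D) ((D : ZMod p) * b)
  rwa [← mul_add_one, map_mul, map_mul, (quadraticChar_one_iff_isSquare hb0).mpr hb,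
    quadraticChar_neg_one_iff_not_isSquare.mpr hb1, mul_one, mul_neg_one] at this

theorem neg_mk_mem_jacobiPairs (hp2 : p ≠ 2) (hp3 : p ≠ 3) :
    (-legendreSym p D, legendreSym p D) ∈ jacobiPairs D p := by
  obtain ⟨b, hb, hb0, hb1⟩ := ZMod.exists_not_isSquare_isSquare_add_one hp2 hp3
  have := quadraticChar_mem_jacobiPairs (D := D) ((D : ZMod p) * b)
  rwa [← mul_add_one, map_mul, map_mul, (quadraticChar_one_iff_isSquare hb0).mpr hb1,
    quadraticChar_neg_one_iff_not_isSquare.mpr hb, mul_one, mul_neg_one] at this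

theorem antidiag_mem_jacobiPairs (hp2 : p ≠ 2) (hp3 : p ≠ 3) (hD : (D : ZMod p) ≠ 0) :
    (1, -1) ∈ jacobiPairs D p ∧ (-1, 1) ∈ jacobiPairs D p := by
  have h₁ := mk_neg_mem_jacobiPairs (D := D) hp2
  have h₂ := neg_mk_mem_jacobiPairs (D := D) hp2 hp3
  rcases legendreSym.eq_one_or_neg_one p hD with h | h <;> rw [h] at h₁ h₂
  · exact ⟨h₁, h₂⟩
  · rw [neg_neg] at h₁ h₂
    exact ⟨h₂, h₁⟩

theorem one_mem_jacobiPairs_prime (hp2 : p ≠ 2) (hp3 : p ≠ 3) (hp5 : p ≠ 5) :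
    1 ∈ jacobiPairs D p := by
  obtain ⟨y, z, hy, hz, hyz⟩ := ZMod.exists_sq_eq_sq_add hp2 hp3 hp5 D
  have := quadraticChar_mem_jacobiPairs (D := D) (y ^ 2)
  rwa [← hyz, quadraticChar_sq_one' hy, quadraticChar_sq_one' hz, ← Prod.one_eq_mk] at this

end Prime

theorem one_mem_jacobiPairs_five (hD : D % 5 = 2 ∨ D % 5 = 3) : 1 ∈ jacobiPairs D 5 := by
  rcases hD with hD | hD
  · refine ⟨4, Prod.ext (by norm_num) ?_⟩
    show jacobiSym (4 + D) 5 = 1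
    rw [jacobiSym.mod_left]
    norm_num [Int.add_emod, hD]
  · refine ⟨1, Prod.ext (by norm_num) ?_⟩
    show jacobiSym (1 + D) 5 = 1
    rw [jacobiSym.mod_left]
    norm_num [Int.add_emod, hD]

theorem neg_one_mem_jacobiPairs_five (hD : D % 5 = 1 ∨ D % 5 = 4) : -1 ∈ jacobiPairs D 5 := by
  rcases hD with hD | hD
  · refine ⟨2, Prod.ext (by norm_num) ?_⟩
    show jacobiSym (2 + D) 5 = -1
    rw [jacobiSym.mod_left]
    norm_num [Int.add_emod, hD]
  · refine ⟨3, Prod.ext (by norm_num) ?_⟩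
    show jacobiSym (3 + D) 5 = -1
    rw [jacobiSym.mod_left]
    norm_num [Int.add_emod, hD]

theorem one_not_mem_jacobiPairs_five (hD : D % 5 = 1 ∨ D % 5 = 4) : 1 ∉ jacobiPairs D 5 := by
  rintro ⟨a, ha⟩
  obtain ⟨h₁, h₂⟩ := Prod.mk_eq_one.mp ha
  rw [jacobiSym.mod_left] at h₁ h₂
  push_cast at h₁ h₂
  rw [Int.add_emod] at h₂
  have := Int.emod_nonneg a (by norm_num : (5 : ℤ) ≠ 0)
  have := Int.emod_lt_of_pos a (by norm_num : (0 : ℤ) < 5)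
  rcases hD with hD | hD <;> rw [hD] at h₂ <;> interval_cases (a % 5) <;> revert h₁ h₂ <;>
    norm_num

theorem jacobiSym_three_eq_zero_of_eq {a : ℤ} (hD : ¬(3 : ℤ) ∣ D)
    (h : jacobiSym a 3 = jacobiSym (a + D) 3) : jacobiSym a 3 = 0 := by
  rw [jacobiSym.mod_left, jacobiSym.mod_left (a + D), Int.add_emod] at *
  push_cast at *
  have := Int.emod_nonneg a (by norm_num : (3 : ℤ) ≠ 0)
  have := Int.emod_lt_of_pos a (by norm_num : (0 : ℤ) < 3)
  rcases (by omega : D % 3 = 1 ∨ D % 3 = 2) with hD | hD <;> rw [hD] at h <;>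
    interval_cases (a % 3) <;> revert h <;> norm_num

theorem one_not_mem_jacobiPairs_three_mul {m : ℕ} (hm : (m : ℤ) ∣ D) (hD : ¬(3 : ℤ) ∣ D) :
    1 ∉ jacobiPairs D (3 * m) := by
  have hm0 : m ≠ 0 := by rintro rfl; exact hD (by simp_all)
  rintro ⟨a, ha⟩
  obtain ⟨h₁, h₂⟩ := Prod.mk_eq_one.mp ha
  rw [jacobiSym.mul_right' _ three_ne_zero hm0] at h₁ h₂
  rw [jacobiSym_add_left_of_dvd hm] at h₂
  have hm : jacobiSym a m ≠ 0 := right_ne_zero_of_mul_eq_one h₁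
  rw [jacobiSym_three_eq_zero_of_eq hD (mul_right_cancel₀ hm (h₁.trans h₂.symm)), zero_mul] at h₁
  exact zero_ne_one h₁

theorem antidiag_mem_jacobiPairs_of_isCoprime {w : ℕ} (hw : Squarefree w) (hw1 : w ≠ 1)
    (hcop : IsCoprime (w : ℤ) (6 * D)) :
    (1, -1) ∈ jacobiPairs D w ∧ (-1, 1) ∈ jacobiPairs D w ∧ (1 ∈ jacobiPairs D w ∨ w = 5) := by
  induction w using Nat.recOnPosPrimePosCoprime with
  | prime_pow p n hp hn =>
    obtain ⟨-, rfl⟩ := (Nat.squarefree_pow_iff hp.ne_one hn.ne').mp hw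
    rw [pow_one] at hcop ⊢
    have := Fact.mk hp
    have hp6 := Int.not_dvd_of_isCoprime hcop dvd_rfl hp.ne_one
    have hp2 : p ≠ 2 := by rintro rfl; exact hp6 ⟨3 * D, by push_cast; ring⟩
    have hp3 : p ≠ 3 := by rintro rfl; exact hp6 ⟨2 * D, by push_cast; ring⟩
    have hD : (D : ZMod p) ≠ 0 := by
      rw [Ne, ZMod.intCast_zmod_eq_zero_iff_dvd]
      exact fun h => hp6 (dvd_mul_of_dvd_right h 6)
    obtain ⟨h₁, h₂⟩ := antidiag_mem_jacobiPairs hp2 hp3 hD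
    exact ⟨h₁, h₂, (eq_or_ne p 5).symm.imp (fun hp5 => one_mem_jacobiPairs_prime hp2 hp3 hp5) id⟩
  | zero => exact absurd hw not_squarefree_zero
  | one => exact absurd rfl hw1
  | coprime a b ha hb hab iha ihb =>
    obtain ⟨-, hsa, hsb⟩ := Nat.squarefree_mul_iff.mp hw
    push_cast at hcop
    obtain ⟨ha₁, ha₂, ha₃⟩ := iha hsa ha.ne' hcop.of_mul_left_left
    obtain ⟨hb₁, hb₂, hb₃⟩ := ihb hsb hb.ne' hcop.of_mul_left_right
    have hmul {x y : ℤ × ℤ} (hx : x ∈ jacobiPairs D a) (hy : y ∈ jacobiPairs D b) :=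
      mul_mem_jacobiPairs (by omega) (by omega) hab hx hy
    have h₁ : 1 ∈ jacobiPairs D a ∨ 1 ∈ jacobiPairs D b := by
      rcases ha₃ with h | rfl
      · exact Or.inl h
      rcases hb₃ with h | rfl
      · exact Or.inr h
      · exact absurd hab (by decide)
    refine ⟨?_, ?_, Or.inl (by simpa [Prod.one_eq_mk] using hmul ha₁ hb₁)⟩ <;>
      rcases h₁ with h | h
    · simpa using hmul h hb₁
    · simpa using hmul ha₁ h
    · simpa using hmul h hb₂
    · simpa using hmul ha₂ h

theorem one_mem_jacobiPairs_of_isCoprime {v : ℕ} (hv : Squarefree v)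
    (hcop : IsCoprime (v : ℤ) (2 * D)) (hv3 : v ≠ 3)
    (hv5 : ¬(v = 5 ∧ (D % 5 = 1 ∨ D % 5 = 4))) : 1 ∈ jacobiPairs D v := by
  have h6D : (6 : ℤ) * D = 3 * (2 * D) := by ring
  by_cases h3 : 3 ∣ v
  · obtain ⟨w, rfl⟩ := h3
    obtain ⟨h3w, -, hw⟩ := Nat.squarefree_mul_iff.mp hv
    have hw0 : w ≠ 0 := by rintro rfl; simp at hv
    have hD : (D : ZMod 3) ≠ 0 := by
      rw [Ne, ZMod.intCast_zmod_eq_zero_iff_dvd]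
      exact fun h => Int.not_dvd_of_isCoprime hcop (dvd_mul_right 3 w) (by norm_num)
        (dvd_mul_of_dvd_right h 2)
    push_cast at hcop
    obtain ⟨h₁, h₂, -⟩ := antidiag_mem_jacobiPairs_of_isCoprime hw (by omega)
      (h6D ▸ (Nat.isCoprime_iff_coprime.mpr h3w.symm).mul_right hcop.of_mul_left_right)
    have h₃ := mk_neg_mem_jacobiPairs (D := D) (p := 3) (by norm_num)
    rcases legendreSym.eq_one_or_neg_one 3 hD with h | h <;> rw [h] at h₃
    · simpa [Prod.one_eq_mk] using mul_mem_jacobiPairs three_ne_zero hw0 h3w h₃ h₁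
    · simpa [Prod.one_eq_mk] using mul_mem_jacobiPairs three_ne_zero hw0 h3w h₃ h₂
  · rcases eq_or_ne v 1 with rfl | hv1
    · exact one_mem_jacobiPairs_of_dvd (by simp)
    have hv3' : IsCoprime (v : ℤ) 3 :=
      Nat.isCoprime_iff_coprime.mpr (Nat.prime_three.coprime_iff_not_dvd.mpr h3).symm
    obtain ⟨-, -, h | rfl⟩ :=
      antidiag_mem_jacobiPairs_of_isCoprime hv hv1 (h6D ▸ hv3'.mul_right hcop)
    · exact h
    · have := Int.not_dvd_of_isCoprime hcop dvd_rfl (by norm_num)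
      apply one_mem_jacobiPairs_five
      omega

end jacobiPairs

theorem one_not_mem_jacobiPairs_of_dvd_three_mul {g d : ℕ} (hg : Squarefree g) (hgd : ¬g ∣ d)
    (hg3 : g ∣ 3 * d) : 1 ∉ jacobiPairs d g := by
  have h3 : 3 ∣ g := by
    by_contra h3
    exact hgd ((Nat.prime_three.coprime_iff_not_dvd.mpr h3).symm.dvd_of_dvd_mul_left hg3)
  obtain ⟨m, rfl⟩ := h3
  have hmd : m ∣ d := Nat.dvd_of_mul_dvd_mul_left three_pos hg3
  have h3d : ¬3 ∣ d := fun h =>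
    hgd ((Nat.coprime_of_squarefree_mul hg).mul_dvd_of_dvd_of_dvd h hmd)
  exact one_not_mem_jacobiPairs_three_mul (Int.natCast_dvd_natCast.mpr hmd)
    (by exact_mod_cast h3d)

theorem one_mem_jacobiPairs_of_squarefree {g d : ℕ} (hodd : Odd g) (hsf : Squarefree g)
    (h5 : ¬(g = 5 ∧ (d % 5 = 1 ∨ d % 5 = 4))) (h3 : ¬(¬g ∣ d ∧ g ∣ 3 * d)) :
    1 ∈ jacobiPairs d g := by
  obtain ⟨u, v, hud, hvd, rfl⟩ := hsf.exists_dvd_coprime_mul_eq d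
  obtain ⟨-, hsu, hsv⟩ := Nat.squarefree_mul_iff.mp hsf
  have huv : u.Coprime v := (hvd.coprime_dvd_right hud).symm
  have hu0 : u ≠ 0 := by rintro rfl; simp at hsf
  have hv0 : v ≠ 0 := by rintro rfl; simp at hsf
  have hudZ : (u : ℤ) ∣ d := Int.natCast_dvd_natCast.mpr hud
  by_cases hv5 : v = 5 ∧ (d % 5 = 1 ∨ d % 5 = 4)
  · obtain ⟨rfl, hd⟩ := hv5
    have hu1 : u ≠ 1 := by rintro rfl; simp [hd] at h5
    obtain ⟨a, ha⟩ := exists_jacobiSym_eq_neg_one hsu (Nat.odd_mul.mp hodd).1 hu1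
    have := mul_mem_jacobiPairs hu0 hv0 huv (diag_mem_jacobiPairs_of_dvd hudZ a)
      (neg_one_mem_jacobiPairs_five (by omega))
    simpa [ha, Prod.one_eq_mk] using this
  · have hv3 : v ≠ 3 := by
      rintro rfl
      refine h3 ⟨fun h => ?_, by rw [mul_comm]; exact Nat.mul_dvd_mul_left 3 hud⟩
      exact absurd (hvd.eq_one_of_dvd (dvd_of_mul_left_dvd h)) (by norm_num)
    have hcop : IsCoprime (v : ℤ) (2 * d) := by
      exact_mod_cast Nat.isCoprime_iff_coprime.mpr
        ((Nat.coprime_two_right.mpr (Nat.odd_mul.mp hodd).2).mul_right hvd)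
    simpa using mul_mem_jacobiPairs hu0 hv0 huv (one_mem_jacobiPairs_of_dvd hudZ)
      (one_mem_jacobiPairs_of_isCoprime hsv hcop hv3 (by omega))

theorem stmt_10_general (g d : ℕ) (hgodd : Odd g) (hgsf : Squarefree g) :
    (((Finset.Icc 1 g).filter
        (fun α : ℕ => jacobiSym (α : ℤ) g = 1 ∧ jacobiSym ((α : ℤ) + d) g = 1)).card = 0
      ↔ ((g = 5 ∧ (d % 5 = 1 ∨ d % 5 = 4)) ∨ (¬ g ∣ d ∧ g ∣ 3 * d))) := by
  rw [card_filter_jacobiSym_eq_zero_iff hgsf.ne_zero, ← not_iff_not, not_not, not_or]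
  refine ⟨fun h => ⟨?_, ?_⟩, fun ⟨h5, h3⟩ => one_mem_jacobiPairs_of_squarefree hgodd hgsf h5 h3⟩
  · rintro ⟨rfl, hd⟩
    exact one_not_mem_jacobiPairs_five (by omega) h
  · rintro ⟨hgd, hg3⟩
    exact one_not_mem_jacobiPairs_of_dvd_three_mul hgsf hgd hg3 h

theorem stmt_10 (g d : ℕ) (hg : 0 < g) (hgodd : Odd g) (hgsf : Squarefree g)
    (hd : 0 < d) (hde : Even d) :
    (((Finset.Icc 1 g).filter
        (fun α : ℕ => jacobiSym (α : ℤ) g = 1 ∧ jacobiSym ((α : ℤ) + d) g = 1)).card = 0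
      ↔ ((g = 5 ∧ (d % 5 = 1 ∨ d % 5 = 4)) ∨ (¬ g ∣ d ∧ g ∣ 3 * d))) :=
  stmt_10_general g d hgodd hgsf
end
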